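/- arXiv:2507.03929 — 3 statements merged into one kernel-verified Lean document; each statement's English description precedes it below -/
import Mathlib

section
/- If M is an answer set of the program P_F, then the clause set {C_i : sel_i ∈ M} is unsatisfiable, i.e., it is an unsatisfiable core of F. -/
/-- A literal is a variable together with a polarity (`true` = positive). -/
abbrev Clause (V : Type) := Finset (V × Bool)

/-- An assignment satisfies a clause if it makes some literal of the clause true. -/
def SatClause {V : Type} (sigma : V → Bool) (C : Clause V) : Prop :=
  ∃ l ∈ C, sigma l.1 = l.2

/-- An assignment satisfies a set of clauses if it satisfies each clause. -/
def SatSet {V : Type} (sigma : V → Bool) (S : Set (Clause V)) : Prop :=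
  ∀ C ∈ S, SatClause sigma C

/-- A set of clauses is satisfiable if some assignment satisfies it. -/
def Satisfiable {V : Type} (S : Set (Clause V)) : Prop :=
  ∃ sigma : V → Bool, SatSet sigma S

/-- The atoms of the program `P_F`: selector atoms `sel i`, atoms `pos x`, `neg x`
for each variable `x`, and the atom `unsat`. -/
inductive Atom (V : Type) (n : ℕ) where
  | sel (i : Fin n)
  | pos (x : V)
  | neg (x : V)
  | unsat

/-- The atom falsifying a literal: `neg x` for the positive literal `x`,
`pos x` for the negative literal `¬x`. -/
def falsifier {V : Type} {n : ℕ} (l : V × Bool) : Atom V n :=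
  if l.2 then Atom.neg l.1 else Atom.pos l.1

/-- `M` is a model of the program `P_F` (conditions (M1)-(M4)). -/
def IsModel {V : Type} {n : ℕ} (F : Fin n → Clause V) (M : Set (Atom V n)) : Prop :=
  (∀ x : V, Atom.pos x ∈ M ∨ Atom.neg x ∈ M) ∧
  (∀ i : Fin n, Atom.sel i ∈ M → (∀ l ∈ F i, falsifier l ∈ M) → Atom.unsat ∈ M) ∧
  (Atom.unsat ∈ M) ∧
  (Atom.unsat ∈ M → ∀ x : V, Atom.pos x ∈ M ∧ Atom.neg x ∈ M)

/-- `M'` satisfies every clause of the reduct `P_F^M` (clauses (R1)-(R4)). -/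
def SatisfiesReduct {V : Type} {n : ℕ} (F : Fin n → Clause V)
    (M M' : Set (Atom V n)) : Prop :=
  (∀ x : V, Atom.pos x ∈ M' ∨ Atom.neg x ∈ M') ∧
  (∀ i : Fin n, Atom.sel i ∈ M' → (∀ l ∈ F i, falsifier l ∈ M') → Atom.unsat ∈ M') ∧
  (Atom.unsat ∈ M' → ∀ x : V, Atom.pos x ∈ M' ∧ Atom.neg x ∈ M') ∧
  (∀ i : Fin n, Atom.sel i ∈ M → Atom.sel i ∈ M')

/-- `M` is an answer set of `P_F`: a model of `P_F` such that no proper subset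
satisfies the reduct `P_F^M`. -/
def IsAnswerSet {V : Type} {n : ℕ} (F : Fin n → Clause V) (M : Set (Atom V n)) : Prop :=
  IsModel F M ∧ ∀ M' : Set (Atom V n), M' ⊂ M → ¬ SatisfiesReduct F M M'

/-- The clause set `{C_i : sel_i ∈ M}` associated with an interpretation `M`. -/
def coreOf {V : Type} {n : ℕ} (F : Fin n → Clause V) (M : Set (Atom V n)) :
    Set (Clause V) :=
  {C | ∃ i : Fin n, Atom.sel i ∈ M ∧ F i = C}

/-- An unsatisfiable core of `F`: an unsatisfiable subset of `{C_1, …, C_n}`. -/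
def UnsatCore {V : Type} {n : ℕ} (F : Fin n → Clause V) (U : Set (Clause V)) : Prop :=
  U ⊆ Set.range F ∧ ¬ Satisfiable U

/-- The interpretation `{sel_i : C_i ∈ U} ∪ {unsat} ∪ {pos_x, neg_x : x ∈ V}`. -/
def interpOf {V : Type} {n : ℕ} (F : Fin n → Clause V) (U : Set (Clause V)) :
    Set (Atom V n) :=
  {a | (∃ i : Fin n, F i ∈ U ∧ a = Atom.sel i) ∨ a = Atom.unsat ∨
       (∃ x : V, a = Atom.pos x ∨ a = Atom.neg x)}

/-- If `M` is an answer set of `P_F`, then the clause set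
`{C_i : sel_i ∈ M}` is unsatisfiable, i.e., it is an unsatisfiable core of `F`. -/
theorem answer_set_gives_unsat_core
    (V : Type) [Fintype V] (n : ℕ) (F : Fin n → Clause V)
    (M : Set (Atom V n)) (hM : IsAnswerSet F M) :
    ¬ Satisfiable (coreOf F M) ∧ UnsatCore F (coreOf F M) := by
  obtain ⟨⟨hM1, hM2, hM3, hM4⟩, hMin⟩ := hM
  have hunsat : ¬ Satisfiable (coreOf F M) := by
    rintro ⟨σ, hσ⟩
    set M' : Set (Atom V n) := fun a => match a with
      | Atom.sel i => Atom.sel i ∈ M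
      | Atom.pos x => σ x = true
      | Atom.neg x => σ x = false
      | Atom.unsat => False with hM'def
    have hsub : M' ⊂ M := by
      constructor
      · intro a ha
        match a with
        | Atom.sel i => exact ha
        | Atom.pos x => exact (hM4 hM3 x).1
        | Atom.neg x => exact (hM4 hM3 x).2
        | Atom.unsat => exact (ha : False).elim
      · intro hle
        exact (hle hM3 : False)
    apply hMin M' hsub
    refine ⟨?_, ?_, ?_, ?_⟩
    · intro x
      rcases Bool.eq_false_or_eq_true (σ x) with h | h
      · left; exact h
      · right; exact h
    · intro i hi hfals
      obtain ⟨l, hl, hsat⟩ := hσ (F i) ⟨i, hi, rfl⟩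
      have hf := hfals l hl
      rcases Bool.eq_false_or_eq_true l.2 with h | h
      · rw [h] at hsat
        have : σ l.1 = false := by
          have : falsifier (n := n) l = Atom.neg l.1 := by simp [falsifier, h]
          rw [this] at hf; exact hf
        simp [this] at hsat
      · rw [h] at hsat
        have : σ l.1 = true := by
          have : falsifier (n := n) l = Atom.pos l.1 := by simp [falsifier, h]
          rw [this] at hf; exact hf
        simp [this] at hsat
    · intro h; exact (h : False).elim
    · intro i hi; exact hi
  refine ⟨hunsat, ?_, hunsat⟩
  rintro C ⟨i, _, rfl⟩
  exact ⟨i, rfl⟩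
end

section
/- If U ⊆ {C_1,…,C_n} is an unsatisfiable subset of the clauses of F, then the interpretation τ = {sel_i : C_i ∈ U} ∪ {unsat} ∪ {pos_x, neg_x : x ∈ V} is an answer set of the program P_F. -/
/-- If `U` is an unsatisfiable subset of the clauses of `F`, then the
interpretation `{sel_i : C_i ∈ U} ∪ {unsat} ∪ {pos_x, neg_x : x ∈ V}` is an answer set
of `P_F`. -/
theorem unsat_core_gives_answer_set
    (V : Type) [Fintype V] (n : ℕ) (F : Fin n → Clause V)
    (U : Set (Clause V)) (hsub : U ⊆ Set.range F) (hunsat : ¬ Satisfiable U) :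
    IsAnswerSet F (interpOf F U) := by

  classical
  set M := interpOf F U with hM
  have hposM : ∀ x : V, Atom.pos (n := n) x ∈ M := fun x =>
    Or.inr (Or.inr ⟨x, Or.inl rfl⟩)
  have hnegM : ∀ x : V, Atom.neg (n := n) x ∈ M := fun x =>
    Or.inr (Or.inr ⟨x, Or.inr rfl⟩)
  have hunsatM : Atom.unsat (V := V) (n := n) ∈ M := Or.inr (Or.inl rfl)
  have hselM : ∀ i : Fin n, Atom.sel i ∈ M ↔ F i ∈ U := by
    intro i
    constructor
    · rintro (⟨j, hj, hji⟩ | h | ⟨x, h | h⟩)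
      · cases hji; exact hj
      · exact absurd h (by simp)
      · exact absurd h (by simp)
      · exact absurd h (by simp)
    · intro h; exact Or.inl ⟨i, h, rfl⟩
  constructor
  · exact ⟨fun x => Or.inl (hposM x), fun i _ _ => hunsatM, hunsatM,
      fun _ x => ⟨hposM x, hnegM x⟩⟩
  · rintro M' ⟨hsubM, hne⟩ ⟨r1, r2, r3, r4⟩
    by_cases hu : Atom.unsat (V := V) (n := n) ∈ M'
    · apply hne
      intro a ha
      rcases ha with ⟨i, hi, rfl⟩ | rfl | ⟨x, rfl | rfl⟩
      · exact r4 i ((hselM i).mpr hi)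
      · exact hu
      · exact (r3 hu x).1
      · exact (r3 hu x).2
    · apply hunsat
      refine ⟨fun x => if Atom.pos (n := n) x ∈ M' then true else false, ?_⟩
      intro C hC
      obtain ⟨i, rfl⟩ := hsub hC
      have hsel : Atom.sel i ∈ M' := r4 i ((hselM i).mpr hC)
      have : ¬ ∀ l ∈ F i, falsifier l ∈ M' := fun h => hu (r2 i hsel h)
      push_neg at this
      obtain ⟨l, hl, hfl⟩ := this
      refine ⟨l, hl, ?_⟩
      obtain ⟨x, b⟩ := l
      cases b with
      | true =>
        have hpx : Atom.pos (n := n) x ∈ M' := by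
          rcases r1 x with h | h
          · exact h
          · exact absurd h (by simpa [falsifier] using hfl)
        simp [hpx]
      | false =>
        have hpx : Atom.pos (n := n) x ∉ M' := by simpa [falsifier] using hfl
        simp [hpx]
end

section
/- Let M' ⊆ A be an interpretation with unsat ∉ M' that satisfies all clauses of types (R1) and (R2) of the reduct (i.e., for each x ∈ V, pos_x ∈ M' or neg_x ∈ M'; and for each clause C_i = {x_1,…,x_k, ¬x_{k+1},…,¬x_{k+m}}, it is not the case that sel_i ∈ M' and all of neg_{x_1},…,neg_{x_k}, pos_{x_{k+1}},…,pos_{x_{k+m}} are in M'). Then the assignment σ defined by σ(x) = true iff pos_x ∈ M' satisfies every clause C_i with sel_i ∈ M'. In particular, the clause set {C_i : sel_i ∈ M'} is satisfiable. -/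
/-- If `unsat ∉ M'` and `M'` satisfies all clauses of types (R1) and
(R2) of the reduct, then the assignment `σ` with `σ(x) = true` iff `pos_x ∈ M'`
satisfies every clause `C_i` with `sel_i ∈ M'`; in particular the clause set
`{C_i : sel_i ∈ M'}` is satisfiable. -/
theorem reduct_satisfaction_gives_assignment
    (V : Type) [Fintype V] (n : ℕ) (F : Fin n → Clause V)
    (M' : Set (Atom V n)) (hunsat : Atom.unsat ∉ M')
    (hR1 : ∀ x : V, Atom.pos x ∈ M' ∨ Atom.neg x ∈ M')
    (hR2 : ∀ i : Fin n, ¬ (Atom.sel i ∈ M' ∧ ∀ l ∈ F i, falsifier l ∈ M'))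
    (sigma : V → Bool) (hsigma : ∀ x : V, sigma x = true ↔ Atom.pos x ∈ M') :
    (∀ i : Fin n, Atom.sel i ∈ M' → SatClause sigma (F i)) ∧
    Satisfiable {C | ∃ i : Fin n, Atom.sel i ∈ M' ∧ F i = C} := by
  have key : ∀ i : Fin n, Atom.sel i ∈ M' → SatClause sigma (F i) := by
    intro i hi
    have h := hR2 i
    push_neg at h
    obtain ⟨l, hl, hfl⟩ := h hi
    refine ⟨l, hl, ?_⟩
    unfold falsifier at hfl
    cases hb : l.2 with
    | true =>
      simp [hb] at hfl
      rcases hR1 l.1 with hp | hn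
      · exact (hsigma l.1).mpr hp
      · exact absurd hn hfl
    | false =>
      simp [hb] at hfl
      have : sigma l.1 ≠ true := fun h => hfl ((hsigma l.1).mp h)
      simpa using this
  refine ⟨key, sigma, ?_⟩
  rintro C ⟨i, hi, rfl⟩
  exact key i hi
end
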